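/- If S is a minimum augmentation sequence whose generated network has leaf set [n] (n ≥ 2), then the last pair of S is of the form (i, n) for some i < n; i.e., the second coordinate of the last pair is the maximum taxon n. -/
import Mathlib


/-- A directed graph with node set `V ⊆ ℕ` and arc set `A`.  Leaves are
identified with their taxon labels (natural numbers). -/
structure Net where
  V : Finset ℕ
  A : Finset (ℕ × ℕ)

namespace Net

def indeg (N : Net) (v : ℕ) : ℕ := (N.A.filter (fun a => a.2 = v)).card
def outdeg (N : Net) (v : ℕ) : ℕ := (N.A.filter (fun a => a.1 = v)).card

def isLeaf (N : Net) (v : ℕ) : Prop := v ∈ N.V ∧ N.indeg v = 1 ∧ N.outdeg v = 0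
def isRoot (N : Net) (v : ℕ) : Prop := v ∈ N.V ∧ N.indeg v = 0 ∧ N.outdeg v = 1
def isTreeNode (N : Net) (v : ℕ) : Prop := v ∈ N.V ∧ N.indeg v = 1 ∧ N.outdeg v = 2
def isRetic (N : Net) (v : ℕ) : Prop := v ∈ N.V ∧ N.indeg v = 2 ∧ N.outdeg v = 1

/-- The set of leaves (= taxa) of a network. -/
def leaves (N : Net) : Finset ℕ := N.V.filter (fun v => N.indeg v = 1 ∧ N.outdeg v = 0)

/-- Number of reticulation nodes. -/
def numRetic (N : Net) : ℕ := (N.V.filter (fun v => N.indeg v = 2 ∧ N.outdeg v = 1)).card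

/-- `N` is a rooted binary phylogenetic network: arcs join nodes, it is acyclic,
has a unique root, and every node is a root, leaf, tree node or reticulation. -/
def isPhylo (N : Net) : Prop :=
  (∀ a ∈ N.A, a.1 ∈ N.V ∧ a.2 ∈ N.V) ∧
  (∀ v, ¬ Relation.TransGen (fun u w => (u, w) ∈ N.A) v v) ∧
  (∃! r, N.isRoot r) ∧
  (∀ v ∈ N.V, N.isRoot v ∨ N.isLeaf v ∨ N.isTreeNode v ∨ N.isRetic v)

/-- `(i,j)` is a cherry: `i ≠ j` are leaves with a common parent. -/
def isCherry (N : Net) (i j : ℕ) : Prop :=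
  i ≠ j ∧ N.isLeaf i ∧ N.isLeaf j ∧ ∃ p, (p, i) ∈ N.A ∧ (p, j) ∈ N.A

/-- `(i,j)` is a reticulated cherry: the parent of `i` is a reticulation,
the parent of `j` is a tree node and a parent of the parent of `i`. -/
def isRetCherry (N : Net) (i j : ℕ) : Prop :=
  i ≠ j ∧ N.isLeaf i ∧ N.isLeaf j ∧
    ∃ pi pj, (pi, i) ∈ N.A ∧ (pj, j) ∈ N.A ∧
      N.isRetic pi ∧ N.isTreeNode pj ∧ (pj, pi) ∈ N.A

/-- `(i,j)` is a reducible pair. -/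
def Reducible (N : Net) (s : ℕ × ℕ) : Prop := N.isCherry s.1 s.2 ∨ N.isRetCherry s.1 s.2

end Net

/-- The reduction of a cherry `(i,j)`: delete leaf `i` and simplify the
(now elementary) common parent `p`, whose parent is `g`. -/
def CherryReduce (N : Net) (i j : ℕ) (N' : Net) : Prop :=
  ∃ p g, (p, i) ∈ N.A ∧ (p, j) ∈ N.A ∧ (g, p) ∈ N.A ∧
    N'.V = (N.V.erase i).erase p ∧
    N'.A = (N.A \ {(p, i), (p, j), (g, p)}) ∪ {(g, j)}

/-- The reduction of a reticulated cherry `(i,j)`: delete the arc from the parent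
`pj` of `j` to the parent `pi` of `i`, and simplify the two elementary nodes. -/
def RetCherryReduce (N : Net) (i j : ℕ) (N' : Net) : Prop :=
  ∃ pi pj q g, (pi, i) ∈ N.A ∧ (pj, j) ∈ N.A ∧ (pj, pi) ∈ N.A ∧
    (q, pi) ∈ N.A ∧ q ≠ pj ∧ (g, pj) ∈ N.A ∧
    N'.V = (N.V.erase pi).erase pj ∧
    N'.A = (N.A \ {(pj, pi), (q, pi), (pi, i), (g, pj), (pj, j)}) ∪ {(q, i), (g, j)}

/-- `N'` is the reduction `N^{(i,j)}` of the reducible pair `s = (i,j)` in `N`. -/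
def Reduces (N : Net) (s : ℕ × ℕ) (N' : Net) : Prop :=
  (N.isCherry s.1 s.2 ∧ CherryReduce N s.1 s.2 N') ∨
  (N.isRetCherry s.1 s.2 ∧ RetCherryReduce N s.1 s.2 N')

/-- `N'` is the result of reducing in `N` the pairs of the sequence `S`, from left to right. -/
inductive ReducesSeq : Net → List (ℕ × ℕ) → Net → Prop
  | nil (N : Net) : ReducesSeq N [] N
  | cons {N M N' : Net} {s : ℕ × ℕ} {S : List (ℕ × ℕ)} :
      Reduces N s M → ReducesSeq M S N' → ReducesSeq N (s :: S) N'

/-- `N` is the trivial network `I l` (a root and the leaf `l`). -/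
def isTrivial (N : Net) (l : ℕ) : Prop :=
  ∃ r, r ≠ l ∧ N.V = {r, l} ∧ N.A = {(r, l)}

/-- `S` is a complete reducible sequence for `N`. -/
def CompleteRS (N : Net) (S : List (ℕ × ℕ)) : Prop :=
  ∃ N' l, ReducesSeq N S N' ∧ isTrivial N' l

/-- `N` is an orchard network. -/
def Net.isOrchard (N : Net) : Prop := N.isPhylo ∧ ∃ S, CompleteRS N S

/-- Isomorphism of networks: an arc-preserving and arc-reflecting bijection
of the nodes which is the identity on the leaves. -/
def NetIso (N N' : Net) : Prop :=
  ∃ φ : ℕ → ℕ, Set.BijOn φ ↑N.V ↑N'.V ∧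
    (∀ u ∈ N.V, ∀ v ∈ N.V, ((u, v) ∈ N.A ↔ (φ u, φ v) ∈ N'.A)) ∧
    ∀ l ∈ N.leaves, φ l = l

/-- Augmentation of `(i,j)` when `i` is a new taxon: create a new leaf `i`,
subdivide the arc `(q,j)` into `j` with a new node `p`, and add the arc `(p,i)`. -/
def CherryAug (N : Net) (i j : ℕ) (N' : Net) : Prop :=
  ∃ q p, (q, j) ∈ N.A ∧ i ∉ N.V ∧ p ∉ N.V ∧ p ≠ i ∧
    N'.V = insert i (insert p N.V) ∧
    N'.A = (N.A.erase (q, j)) ∪ {(q, p), (p, j), (p, i)}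

/-- Augmentation of `(i,j)` when `i` is already a leaf: subdivide the arcs into
`i` and `j` with new nodes `pi`, `pj` and add the arc `(pj, pi)`. -/
def RetAug (N : Net) (i j : ℕ) (N' : Net) : Prop :=
  ∃ qi qj pi pj, (qi, i) ∈ N.A ∧ (qj, j) ∈ N.A ∧
    pi ∉ N.V ∧ pj ∉ N.V ∧ pi ≠ pj ∧
    N'.V = insert pi (insert pj N.V) ∧
    N'.A = ((N.A.erase (qi, i)).erase (qj, j)) ∪
      {(qi, pi), (pi, i), (qj, pj), (pj, j), (pj, pi)}

/-- `N'` is the augmentation `^{(i,j)}N` of the pair `s = (i,j)` in `N`. -/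
def Augments (N : Net) (s : ℕ × ℕ) (N' : Net) : Prop :=
  s.1 ≠ s.2 ∧ N.isLeaf s.2 ∧
    ((s.1 ∉ N.leaves ∧ CherryAug N s.1 s.2 N') ∨
     (s.1 ∈ N.leaves ∧ RetAug N s.1 s.2 N'))

/-- The total order on pairs: `(i,j) ≤ (i',j')` iff `i < i'` or (`i = i'` and `j ≤ j'`). -/
def pairLE (p q : ℕ × ℕ) : Prop := p.1 < q.1 ∨ (p.1 = q.1 ∧ p.2 ≤ q.2)

/-- Strict version of `pairLE`. -/
def pairLT (p q : ℕ × ℕ) : Prop := p.1 < q.1 ∨ (p.1 = q.1 ∧ p.2 < q.2)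

/-- Lexicographic order on sequences of pairs (of the same length). -/
def seqLE : List (ℕ × ℕ) → List (ℕ × ℕ) → Prop
  | [], [] => True
  | p :: S, q :: S' => pairLT p q ∨ (p = q ∧ seqLE S S')
  | _, _ => False

/-- `s` is the minimum reducible pair of `N`. -/
def isMRP (N : Net) (s : ℕ × ℕ) : Prop :=
  N.Reducible s ∧ ∀ t, N.Reducible t → pairLE s t

/-- `S` is the minimum complete reducible sequence of `N`. -/
def isMCRS (N : Net) (S : List (ℕ × ℕ)) : Prop :=
  CompleteRS N S ∧ ∀ S', CompleteRS N S' → seqLE S S'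

/-- `N` is (isomorphic to) the network `^S I` generated by applying the
augmentations of `S`, from right to left, to a trivial network. -/
inductive Generates : List (ℕ × ℕ) → Net → Prop
  | triv {N : Net} {l : ℕ} : isTrivial N l → Generates [] N
  | cons {s : ℕ × ℕ} {S : List (ℕ × ℕ)} {N N' : Net} :
      Generates S N → Augments N s N' → Generates (s :: S) N'

/-- `S` is a minimum augmentation sequence: `S = MCRS(^S I)`. -/
def isMinAugSeq (S : List (ℕ × ℕ)) : Prop :=
  ∃ N, Generates S N ∧ isMCRS N S

/-- `N` is tree-child: every internal node has a child that is not a reticulation. -/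
def Net.isTreeChild (N : Net) : Prop :=
  ∀ v ∈ N.V, ¬ N.isLeaf v → ∃ c, (v, c) ∈ N.A ∧ ¬ N.isRetic c

/-- The possible states of a taxon in a network. -/
inductive LState | sN | sP | sS | sT
deriving DecidableEq

open Classical in
/-- The state `σ_N(i)` of a taxon `i`: `sN` if `i` is not a leaf of `N`; otherwise
`sP` if its parent is a reticulation; otherwise `sS` if its sibling is a
reticulation; otherwise `sT`. -/
noncomputable def state (N : Net) (i : ℕ) : LState :=
  if ¬ N.isLeaf i then .sN
  else if ∃ p, (p, i) ∈ N.A ∧ N.isRetic p then .sP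
  else if ∃ p s, (p, i) ∈ N.A ∧ (p, s) ∈ N.A ∧ s ≠ i ∧ N.isRetic s then .sS
  else .sT

section AuxProof
open Finset

namespace Net

lemma mem_leaves {N : Net} {v : ℕ} : v ∈ N.leaves ↔ N.isLeaf v := by
  simp [leaves, isLeaf, Finset.mem_filter]

lemma not_out {N : Net} {v : ℕ} (h : N.outdeg v = 0) {a : ℕ × ℕ} (ha : a ∈ N.A) : a.1 ≠ v := by
  intro hv
  have h0 : N.A.filter (fun a => a.1 = v) = ∅ := Finset.card_eq_zero.mp h
  have hm : a ∈ N.A.filter (fun a => a.1 = v) := Finset.mem_filter.2 ⟨ha, hv⟩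
  rw [h0] at hm
  exact absurd hm (Finset.notMem_empty _)

lemma outdeg_ne_zero {N : Net} {v u : ℕ} (h : (v, u) ∈ N.A) : N.outdeg v ≠ 0 :=
  fun h0 => not_out h0 h rfl

lemma indeg_ne_zero {N : Net} {v u : ℕ} (h : (u, v) ∈ N.A) : N.indeg v ≠ 0 := by
  intro h0
  have heq : N.A.filter (fun a => a.2 = v) = ∅ := Finset.card_eq_zero.mp h0
  have hm : ((u,v) : ℕ×ℕ) ∈ N.A.filter (fun a => a.2 = v) := Finset.mem_filter.2 ⟨h, rfl⟩
  rw [heq] at hm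
  exact absurd hm (Finset.notMem_empty _)

lemma in_unique {N : Net} {p v : ℕ} (h : N.indeg v = 1) (hp : (p,v) ∈ N.A) :
    ∀ a ∈ N.A, a.2 = v → a = (p,v) := by
  intro a ha hav
  obtain ⟨a0, ha0⟩ := Finset.card_eq_one.mp h
  have hm : ((p,v) : ℕ×ℕ) ∈ N.A.filter (fun a => a.2 = v) := Finset.mem_filter.2 ⟨hp, rfl⟩
  have hm2 : a ∈ N.A.filter (fun a => a.2 = v) := Finset.mem_filter.2 ⟨ha, hav⟩
  rw [ha0, Finset.mem_singleton] at hm hm2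
  rw [hm2, hm]

lemma indeg_congr {N N' : Net} {v : ℕ}
    (h : ∀ a : ℕ × ℕ, a.2 = v → (a ∈ N'.A ↔ a ∈ N.A)) : N'.indeg v = N.indeg v := by
  unfold indeg
  congr 1
  ext a
  simp only [Finset.mem_filter]
  constructor
  · rintro ⟨ha, h2⟩; exact ⟨(h a h2).1 ha, h2⟩
  · rintro ⟨ha, h2⟩; exact ⟨(h a h2).2 ha, h2⟩

lemma outdeg_congr {N N' : Net} {v : ℕ}
    (h : ∀ a : ℕ × ℕ, a.1 = v → (a ∈ N'.A ↔ a ∈ N.A)) : N'.outdeg v = N.outdeg v := by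
  unfold outdeg
  congr 1
  ext a
  simp only [Finset.mem_filter]
  constructor
  · rintro ⟨ha, h2⟩; exact ⟨(h a h2).1 ha, h2⟩
  · rintro ⟨ha, h2⟩; exact ⟨(h a h2).2 ha, h2⟩

lemma indeg_eq_one_of_filter {N : Net} {v : ℕ} {a0 : ℕ × ℕ}
    (h : N.A.filter (fun a => a.2 = v) = {a0}) : N.indeg v = 1 := by
  unfold indeg; rw [h]; simp

lemma outdeg_eq_zero_of_filter {N : Net} {v : ℕ}
    (h : N.A.filter (fun a => a.1 = v) = ∅) : N.outdeg v = 0 := by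
  unfold outdeg; rw [h]; simp

/-- Well-formedness: arcs join nodes. -/
def WF (N : Net) : Prop := ∀ a ∈ N.A, a.1 ∈ N.V ∧ a.2 ∈ N.V

end Net

lemma leaves_trivial {N : Net} {l : ℕ} (h : isTrivial N l) : N.leaves = {l} := by
  obtain ⟨r, hrl, hV, hA⟩ := h
  ext v
  simp only [Net.leaves, Finset.mem_filter, hV, hA, Net.indeg, Net.outdeg,
    Finset.mem_insert, Finset.mem_singleton]
  constructor
  · rintro ⟨hv | hv, hi, ho⟩
    · exfalso
      subst hv
      rw [Finset.filter_singleton] at hi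
      simp [hrl.symm] at hi
    · exact hv
  · intro hv
    subst hv
    refine ⟨Or.inr rfl, ?_, ?_⟩
    · rw [Finset.filter_singleton]; simp
    · rw [Finset.filter_singleton]; simp [hrl]



namespace Net

lemma wf_of_generates {S : List (ℕ×ℕ)} {N : Net} (h : Generates S N) : N.WF := by
  induction h with
  | triv ht =>
    obtain ⟨r, hrl, hV, hA⟩ := ht
    intro a ha
    rw [hA, Finset.mem_singleton] at ha
    subst ha
    rw [hV]; simp
  | @cons s S N N' hgen haug ih =>
    obtain ⟨hne, hleaf, hcase⟩ := haug
    rcases hcase with ⟨hni, q, p, hqj, hinV, hpnV, hpi, hV, hA⟩ |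
      ⟨hil, qi, qj, pi, pj, hqi, hqj, hpiV, hpjV, hpp, hV, hA⟩
    · intro a ha
      rw [hA] at ha
      rw [hV]
      rcases Finset.mem_union.mp ha with h1 | h1
      · have h2 := ih _ (Finset.mem_of_mem_erase h1)
        exact ⟨by simp [h2.1], by simp [h2.2]⟩
      · simp only [Finset.mem_insert, Finset.mem_singleton] at h1
        have hq := (ih _ hqj).1
        have hj := hleaf.1
        rcases h1 with rfl | rfl | rfl <;> simp [hq, hj]
    · intro a ha
      rw [hA] at ha
      rw [hV]
      rcases Finset.mem_union.mp ha with h1 | h1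
      · have h2 := ih _ (Finset.mem_of_mem_erase (Finset.mem_of_mem_erase h1))
        exact ⟨by simp [h2.1], by simp [h2.2]⟩
      · simp only [Finset.mem_insert, Finset.mem_singleton] at h1
        have hqi' := (ih _ hqi).1
        have hqj' := (ih _ hqj).1
        have hiV : s.1 ∈ N.V := (mem_leaves.mp hil).1
        have hjV : s.2 ∈ N.V := hleaf.1
        rcases h1 with rfl | rfl | rfl | rfl | rfl <;> simp [hqi', hqj', hiV, hjV]

lemma leaves_cherryAug {N N' : Net} {i j : ℕ} (hwf : N.WF) (hj : N.isLeaf j)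
    (hca : CherryAug N i j N') : N'.leaves = insert i N.leaves := by
  obtain ⟨q, p, hqj, hiV, hpV, hpi, hV, hA⟩ := hca
  have hqV : q ∈ N.V := (hwf _ hqj).1
  have hjV : j ∈ N.V := hj.1
  have hij : i ≠ j := fun h => hiV (h ▸ hjV)
  have hqi : q ≠ i := fun h => hiV (h ▸ hqV)
  have hqp : q ≠ p := fun h => hpV (h ▸ hqV)
  have hpj : p ≠ j := fun h => hpV (h ▸ hjV)
  have hqj' : q ≠ j := by intro h; subst h; exact outdeg_ne_zero hqj hj.2.2
  have hmemA : ∀ a : ℕ×ℕ, a ∈ N'.A ↔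
      ((a ∈ N.A ∧ a ≠ (q,j)) ∨ a = (q,p) ∨ a = (p,j) ∨ a = (p,i)) := by
    intro a
    rw [hA]
    simp only [Finset.mem_union, Finset.mem_erase, Finset.mem_insert, Finset.mem_singleton]
    tauto
  ext v
  rw [mem_leaves, Finset.mem_insert, mem_leaves]
  by_cases hvi : v = i
  · subst hvi
    have hfi : N'.A.filter (fun a => a.2 = v) = {(p,v)} := by
      ext a
      simp only [Finset.mem_filter, Finset.mem_singleton, hmemA a]
      constructor
      · rintro ⟨(⟨ha, hne⟩ | rfl | rfl | rfl), h2⟩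
        · exact absurd (h2 ▸ (hwf a ha).2) hiV
        · exact absurd h2 hpi
        · exact absurd h2 hij.symm
        · rfl
      · rintro rfl
        exact ⟨Or.inr (Or.inr (Or.inr rfl)), rfl⟩
    have hfo : N'.A.filter (fun a => a.1 = v) = ∅ := by
      rw [Finset.filter_eq_empty_iff]
      intro a ha
      rw [hmemA a] at ha
      rcases ha with ⟨ha, _⟩ | rfl | rfl | rfl
      · exact fun h => hiV (h ▸ (hwf a ha).1)
      · exact hqi
      · exact hpi
      · exact hpi
    exact iff_of_true ⟨by rw [hV]; simp, indeg_eq_one_of_filter hfi,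
      outdeg_eq_zero_of_filter hfo⟩ (Or.inl rfl)
  · by_cases hvp : v = p
    · subst hvp
      refine iff_of_false (fun h => ?_) (fun h => ?_)
      · exact outdeg_ne_zero ((hmemA (v,j)).2 (Or.inr (Or.inr (Or.inl rfl)))) h.2.2
      · rcases h with h | h
        · exact hpi h
        · exact hpV h.1
    · by_cases hvq : v = q
      · subst hvq
        refine iff_of_false (fun h => ?_) (fun h => ?_)
        · exact outdeg_ne_zero ((hmemA (v,p)).2 (Or.inr (Or.inl rfl))) h.2.2
        · rcases h with h | h
          · exact hqi h
          · exact outdeg_ne_zero hqj h.2.2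
      · by_cases hvj : v = j
        · subst hvj
          have hfi : N'.A.filter (fun a => a.2 = v) = {(p,v)} := by
            ext a
            simp only [Finset.mem_filter, Finset.mem_singleton, hmemA a]
            constructor
            · rintro ⟨(⟨ha, hne⟩ | rfl | rfl | rfl), h2⟩
              · exact absurd (in_unique hj.2.1 hqj a ha h2) hne
              · exact absurd h2 hpj
              · rfl
              · exact absurd h2 hij
            · rintro rfl
              exact ⟨Or.inr (Or.inr (Or.inl rfl)), rfl⟩
          have hfo : N'.A.filter (fun a => a.1 = v) = ∅ := by
            rw [Finset.filter_eq_empty_iff]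
            intro a ha
            rw [hmemA a] at ha
            rcases ha with ⟨ha, _⟩ | rfl | rfl | rfl
            · exact not_out hj.2.2 ha
            · exact hqj'
            · exact hpj
            · exact hpj
          exact iff_of_true ⟨by rw [hV]; simp [hjV], indeg_eq_one_of_filter hfi,
            outdeg_eq_zero_of_filter hfo⟩ (Or.inr hj)
        · have hVv : v ∈ N'.V ↔ v ∈ N.V := by
            rw [hV]; simp [hvi, hvp]
          have hdi : N'.indeg v = N.indeg v := by
            refine indeg_congr (fun a h2 => ?_)
            rw [hmemA a]
            constructor
            · rintro (⟨ha, _⟩ | rfl | rfl | rfl)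
              · exact ha
              · exact absurd h2 (by simpa using Ne.symm hvp)
              · exact absurd h2 (by simpa using Ne.symm hvj)
              · exact absurd h2 (by simpa using Ne.symm hvi)
            · intro ha
              exact Or.inl ⟨ha, fun he => hvj (by rw [he] at h2; exact h2.symm ▸ rfl)⟩
          have hdo : N'.outdeg v = N.outdeg v := by
            refine outdeg_congr (fun a h1 => ?_)
            rw [hmemA a]
            constructor
            · rintro (⟨ha, _⟩ | rfl | rfl | rfl)
              · exact ha
              · exact absurd h1 (by simpa using Ne.symm hvq)
              · exact absurd h1 (by simpa using Ne.symm hvp)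
              · exact absurd h1 (by simpa using Ne.symm hvp)
            · intro ha
              exact Or.inl ⟨ha, fun he => hvq (by rw [he] at h1; exact h1.symm ▸ rfl)⟩
          unfold isLeaf
          rw [hVv, hdi, hdo]
          simp [hvi]

end Net



namespace Net

lemma leaves_retAug {N N' : Net} {i j : ℕ} (hwf : N.WF) (hi : N.isLeaf i) (hj : N.isLeaf j)
    (hij : i ≠ j) (hra : RetAug N i j N') : N'.leaves = N.leaves := by
  obtain ⟨qi, qj, pi, pj, hqi, hqj, hpiV, hpjV, hpinepj, hV, hA⟩ := hra
  have hiV : i ∈ N.V := hi.1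
  have hjV : j ∈ N.V := hj.1
  have hqiV : qi ∈ N.V := (hwf _ hqi).1
  have hqjV : qj ∈ N.V := (hwf _ hqj).1
  have hpii : pi ≠ i := fun h => hpiV (h ▸ hiV)
  have hpij : pi ≠ j := fun h => hpiV (h ▸ hjV)
  have hpji : pj ≠ i := fun h => hpjV (h ▸ hiV)
  have hpjj : pj ≠ j := fun h => hpjV (h ▸ hjV)
  have hpiqi : pi ≠ qi := fun h => hpiV (h ▸ hqiV)
  have hpiqj : pi ≠ qj := fun h => hpiV (h ▸ hqjV)
  have hpjqi : pj ≠ qi := fun h => hpjV (h ▸ hqiV)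
  have hpjqj : pj ≠ qj := fun h => hpjV (h ▸ hqjV)
  have hqii : qi ≠ i := by intro h; subst h; exact outdeg_ne_zero hqi hi.2.2
  have hqij : qi ≠ j := by intro h; subst h; exact outdeg_ne_zero hqi hj.2.2
  have hqjj : qj ≠ j := by intro h; subst h; exact outdeg_ne_zero hqj hj.2.2
  have hqji : qj ≠ i := by intro h; subst h; exact outdeg_ne_zero hqj hi.2.2
  have hmemA : ∀ a : ℕ×ℕ, a ∈ N'.A ↔
      ((a ∈ N.A ∧ a ≠ (qi,i) ∧ a ≠ (qj,j)) ∨ a = (qi,pi) ∨ a = (pi,i) ∨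
        a = (qj,pj) ∨ a = (pj,j) ∨ a = (pj,pi)) := by
    intro a
    rw [hA]
    simp only [Finset.mem_union, Finset.mem_erase, Finset.mem_insert, Finset.mem_singleton]
    tauto
  ext v
  rw [mem_leaves, mem_leaves]
  by_cases hvpi : v = pi
  · subst hvpi
    refine iff_of_false (fun h => ?_) (fun h => hpiV h.1)
    exact outdeg_ne_zero ((hmemA (v,i)).2 (Or.inr (Or.inr (Or.inl rfl)))) h.2.2
  by_cases hvpj : v = pj
  · subst hvpj
    refine iff_of_false (fun h => ?_) (fun h => hpjV h.1)
    exact outdeg_ne_zero ((hmemA (v,j)).2 (Or.inr (Or.inr (Or.inr (Or.inr (Or.inl rfl)))))) h.2.2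
  by_cases hvqi : v = qi
  · subst hvqi
    refine iff_of_false (fun h => ?_) (fun h => outdeg_ne_zero hqi h.2.2)
    exact outdeg_ne_zero ((hmemA (v,pi)).2 (Or.inr (Or.inl rfl))) h.2.2
  by_cases hvqj : v = qj
  · subst hvqj
    refine iff_of_false (fun h => ?_) (fun h => outdeg_ne_zero hqj h.2.2)
    exact outdeg_ne_zero ((hmemA (v,pj)).2 (Or.inr (Or.inr (Or.inr (Or.inl rfl))))) h.2.2
  by_cases hvi : v = i
  · subst hvi
    have hfi : N'.A.filter (fun a => a.2 = v) = {(pi,v)} := by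
      ext a
      simp only [Finset.mem_filter, Finset.mem_singleton, hmemA a]
      constructor
      · rintro ⟨(⟨ha, hne1, hne2⟩ | rfl | rfl | rfl | rfl | rfl), h2⟩
        · exact absurd (in_unique hi.2.1 hqi a ha h2) hne1
        · exact absurd h2 hpii
        · rfl
        · exact absurd h2 hpji
        · exact absurd h2 hij.symm
        · exact absurd h2 hpii
      · rintro rfl
        exact ⟨Or.inr (Or.inr (Or.inl rfl)), rfl⟩
    have hfo : N'.A.filter (fun a => a.1 = v) = ∅ := by
      rw [Finset.filter_eq_empty_iff]
      intro a ha
      rw [hmemA a] at ha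
      rcases ha with ⟨ha, _, _⟩ | rfl | rfl | rfl | rfl | rfl
      · exact not_out hi.2.2 ha
      · exact hqii
      · exact hpii
      · exact hqji
      · exact hpji
      · exact hpji
    exact iff_of_true ⟨by rw [hV]; simp [hiV], indeg_eq_one_of_filter hfi,
      outdeg_eq_zero_of_filter hfo⟩ hi
  by_cases hvj : v = j
  · subst hvj
    have hfi : N'.A.filter (fun a => a.2 = v) = {(pj,v)} := by
      ext a
      simp only [Finset.mem_filter, Finset.mem_singleton, hmemA a]
      constructor
      · rintro ⟨(⟨ha, hne1, hne2⟩ | rfl | rfl | rfl | rfl | rfl), h2⟩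
        · exact absurd (in_unique hj.2.1 hqj a ha h2) hne2
        · exact absurd h2 hpij
        · exact absurd h2 hij
        · exact absurd h2 hpjj
        · rfl
        · exact absurd h2 hpij
      · rintro rfl
        exact ⟨Or.inr (Or.inr (Or.inr (Or.inr (Or.inl rfl)))), rfl⟩
    have hfo : N'.A.filter (fun a => a.1 = v) = ∅ := by
      rw [Finset.filter_eq_empty_iff]
      intro a ha
      rw [hmemA a] at ha
      rcases ha with ⟨ha, _, _⟩ | rfl | rfl | rfl | rfl | rfl
      · exact not_out hj.2.2 ha
      · exact hqij
      · exact hpij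
      · exact hqjj
      · exact hpjj
      · exact hpjj
    exact iff_of_true ⟨by rw [hV]; simp [hjV], indeg_eq_one_of_filter hfi,
      outdeg_eq_zero_of_filter hfo⟩ hj
  · have hVv : v ∈ N'.V ↔ v ∈ N.V := by
      rw [hV]; simp [hvpi, hvpj]
    have hdi : N'.indeg v = N.indeg v := by
      refine indeg_congr (fun a h2 => ?_)
      rw [hmemA a]
      constructor
      · rintro (⟨ha, _, _⟩ | rfl | rfl | rfl | rfl | rfl)
        · exact ha
        · exact absurd h2.symm hvpi
        · exact absurd h2.symm hvi
        · exact absurd h2.symm hvpj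
        · exact absurd h2.symm hvj
        · exact absurd h2.symm hvpi
      · intro ha
        exact Or.inl ⟨ha, fun he => hvi (by rw [he] at h2; exact h2.symm),
          fun he => hvj (by rw [he] at h2; exact h2.symm)⟩
    have hdo : N'.outdeg v = N.outdeg v := by
      refine outdeg_congr (fun a h1 => ?_)
      rw [hmemA a]
      constructor
      · rintro (⟨ha, _, _⟩ | rfl | rfl | rfl | rfl | rfl)
        · exact ha
        · exact absurd h1.symm hvqi
        · exact absurd h1.symm hvpi
        · exact absurd h1.symm hvqj
        · exact absurd h1.symm hvpj
        · exact absurd h1.symm hvpj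
      · intro ha
        exact Or.inl ⟨ha, fun he => hvqi (by rw [he] at h1; exact h1.symm),
          fun he => hvqj (by rw [he] at h1; exact h1.symm)⟩
    unfold isLeaf
    rw [hVv, hdi, hdo]

end Net



namespace Net

lemma leaves_augments {N N' : Net} {s : ℕ×ℕ} (hwf : N.WF) (h : Augments N s N') :
    N'.leaves = insert s.1 N.leaves := by
  obtain ⟨hne, hleaf2, hcase⟩ := h
  rcases hcase with ⟨hni, hca⟩ | ⟨hil, hra⟩
  · exact leaves_cherryAug hwf hleaf2 hca
  · rw [leaves_retAug hwf (mem_leaves.mp hil) hleaf2 hne hra]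
    exact (Finset.insert_eq_self.mpr hil).symm

lemma leaves_eq_of_generates {S : List (ℕ×ℕ)} : ∀ {N N' : Net},
    Generates S N → Generates S N' → S ≠ [] → N.leaves = N'.leaves := by
  induction S with
  | nil => intro _ _ _ _ h; exact absurd rfl h
  | cons s S ih =>
    intro N N' h h' _
    cases h with | @cons _ _ M _ hg ha =>
    cases h' with | @cons _ _ M' _ hg' ha' =>
    rw [leaves_augments (wf_of_generates hg) ha, leaves_augments (wf_of_generates hg') ha']
    congr 1
    by_cases hS : S = []
    · subst hS
      cases hg with | @triv _ l ht =>
      cases hg' with | @triv _ l' ht' =>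
      have h1 : s.2 ∈ M.leaves := mem_leaves.mpr ha.2.1
      have h2 : s.2 ∈ M'.leaves := mem_leaves.mpr ha'.2.1
      rw [leaves_trivial ht] at h1 ⊢
      rw [leaves_trivial ht'] at h2 ⊢
      rw [Finset.mem_singleton] at h1 h2
      rw [← h1, ← h2]
    · exact ih hg hg' hS

end Net



namespace Net

lemma cherryReduce_leaf_iff {M M' : Net} {i j : ℕ} (hc : M.isCherry i j)
    (hr : CherryReduce M i j M') : ∀ v, M'.isLeaf v ↔ (M.isLeaf v ∧ v ≠ i) := by
  obtain ⟨hij, hi, hj, _⟩ := hc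
  obtain ⟨p, g, hpi, hpj, hgp, hV, hA⟩ := hr
  have hpi' : p ≠ i := by intro h; subst h; exact outdeg_ne_zero hpi hi.2.2
  have hpj' : p ≠ j := by intro h; subst h; exact outdeg_ne_zero hpi hj.2.2
  have hgi : g ≠ i := by intro h; subst h; exact outdeg_ne_zero hgp hi.2.2
  have hgj : g ≠ j := by intro h; subst h; exact outdeg_ne_zero hgp hj.2.2
  have hmemA : ∀ a : ℕ×ℕ, a ∈ M'.A ↔
      ((a ∈ M.A ∧ a ≠ (p,i) ∧ a ≠ (p,j) ∧ a ≠ (g,p)) ∨ a = (g,j)) := by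
    intro a
    rw [hA]
    simp only [Finset.mem_union, Finset.mem_sdiff, Finset.mem_insert, Finset.mem_singleton]
    tauto
  intro v
  by_cases hvi : v = i
  · subst hvi
    refine iff_of_false (fun h => ?_) (fun h => h.2 rfl)
    have := h.1
    rw [hV] at this
    exact (Finset.mem_erase.mp (Finset.mem_of_mem_erase this)).1 rfl
  by_cases hvp : v = p
  · subst hvp
    refine iff_of_false (fun h => ?_) (fun h => outdeg_ne_zero hpi h.1.2.2)
    have := h.1
    rw [hV] at this
    exact (Finset.mem_erase.mp this).1 rfl
  by_cases hvg : v = g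
  · subst hvg
    refine iff_of_false (fun h => ?_) (fun h => outdeg_ne_zero hgp h.1.2.2)
    exact outdeg_ne_zero ((hmemA (v,j)).2 (Or.inr rfl)) h.2.2
  by_cases hvj : v = j
  · subst hvj
    have hfi : M'.A.filter (fun a => a.2 = v) = {(g,v)} := by
      ext a
      simp only [Finset.mem_filter, Finset.mem_singleton, hmemA a]
      constructor
      · rintro ⟨(⟨ha, hn1, hn2, hn3⟩ | rfl), h2⟩
        · exact absurd (in_unique hj.2.1 hpj a ha h2) hn2
        · rfl
      · rintro rfl
        exact ⟨Or.inr rfl, rfl⟩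
    have hfo : M'.A.filter (fun a => a.1 = v) = ∅ := by
      rw [Finset.filter_eq_empty_iff]
      intro a ha
      rw [hmemA a] at ha
      rcases ha with ⟨ha, _⟩ | rfl
      · exact not_out hj.2.2 ha
      · exact hgj
    refine iff_of_true ⟨?_, indeg_eq_one_of_filter hfi, outdeg_eq_zero_of_filter hfo⟩
      ⟨hj, hij.symm⟩
    rw [hV]
    exact Finset.mem_erase.mpr ⟨hvp, Finset.mem_erase.mpr ⟨hvi, hj.1⟩⟩
  · have hVv : v ∈ M'.V ↔ v ∈ M.V := by
      rw [hV]
      simp [hvi, hvp]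
    have hdi : M'.indeg v = M.indeg v := by
      refine indeg_congr (fun a h2 => ?_)
      rw [hmemA a]
      constructor
      · rintro (⟨ha, _⟩ | rfl)
        · exact ha
        · exact absurd h2.symm hvj
      · intro ha
        refine Or.inl ⟨ha, fun he => hvi (by rw [he] at h2; exact h2.symm),
          fun he => hvj (by rw [he] at h2; exact h2.symm),
          fun he => hvp (by rw [he] at h2; exact h2.symm)⟩
    have hdo : M'.outdeg v = M.outdeg v := by
      refine outdeg_congr (fun a h1 => ?_)
      rw [hmemA a]
      constructor
      · rintro (⟨ha, _⟩ | rfl)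
        · exact ha
        · exact absurd h1.symm hvg
      · intro ha
        refine Or.inl ⟨ha, fun he => hvp (by rw [he] at h1; exact h1.symm),
          fun he => hvp (by rw [he] at h1; exact h1.symm),
          fun he => hvg (by rw [he] at h1; exact h1.symm)⟩
    unfold isLeaf
    rw [hVv, hdi, hdo]
    simp [hvi]

lemma retCherryReduce_leaf_iff {M M' : Net} {i j : ℕ} (hc : M.isRetCherry i j)
    (hr : RetCherryReduce M i j M') : ∀ v, M'.isLeaf v ↔ M.isLeaf v := by
  obtain ⟨hij, hi, hj, _⟩ := hc
  obtain ⟨pi, pj, q, g, hpii, hpjj, hpjpi, hqpi, hqnepj, hgpj, hV, hA⟩ := hr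
  have hpi1 : pi ≠ i := by intro h; subst h; exact outdeg_ne_zero hpii hi.2.2
  have hpi2 : pi ≠ j := by intro h; subst h; exact outdeg_ne_zero hpii hj.2.2
  have hpj1 : pj ≠ i := by intro h; subst h; exact outdeg_ne_zero hpjj hi.2.2
  have hpj2 : pj ≠ j := by intro h; subst h; exact outdeg_ne_zero hpjj hj.2.2
  have hq1 : q ≠ i := by intro h; subst h; exact outdeg_ne_zero hqpi hi.2.2
  have hq2 : q ≠ j := by intro h; subst h; exact outdeg_ne_zero hqpi hj.2.2
  have hg1 : g ≠ i := by intro h; subst h; exact outdeg_ne_zero hgpj hi.2.2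
  have hg2 : g ≠ j := by intro h; subst h; exact outdeg_ne_zero hgpj hj.2.2
  have hmemA : ∀ a : ℕ×ℕ, a ∈ M'.A ↔
      ((a ∈ M.A ∧ a ≠ (pj,pi) ∧ a ≠ (q,pi) ∧ a ≠ (pi,i) ∧ a ≠ (g,pj) ∧ a ≠ (pj,j)) ∨
        a = (q,i) ∨ a = (g,j)) := by
    intro a
    rw [hA]
    simp only [Finset.mem_union, Finset.mem_sdiff, Finset.mem_insert, Finset.mem_singleton]
    tauto
  intro v
  by_cases hvpi : v = pi
  · subst hvpi
    refine iff_of_false (fun h => ?_) (fun h => outdeg_ne_zero hpii h.2.2)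
    have := h.1
    rw [hV] at this
    exact (Finset.mem_erase.mp (Finset.mem_of_mem_erase this)).1 rfl
  by_cases hvpj : v = pj
  · subst hvpj
    refine iff_of_false (fun h => ?_) (fun h => outdeg_ne_zero hpjj h.2.2)
    have := h.1
    rw [hV] at this
    exact (Finset.mem_erase.mp this).1 rfl
  by_cases hvq : v = q
  · subst hvq
    refine iff_of_false (fun h => ?_) (fun h => outdeg_ne_zero hqpi h.2.2)
    exact outdeg_ne_zero ((hmemA (v,i)).2 (Or.inr (Or.inl rfl))) h.2.2
  by_cases hvg : v = g
  · subst hvg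
    refine iff_of_false (fun h => ?_) (fun h => outdeg_ne_zero hgpj h.2.2)
    exact outdeg_ne_zero ((hmemA (v,j)).2 (Or.inr (Or.inr rfl))) h.2.2
  by_cases hvi : v = i
  · subst hvi
    have hfi : M'.A.filter (fun a => a.2 = v) = {(q,v)} := by
      ext a
      simp only [Finset.mem_filter, Finset.mem_singleton, hmemA a]
      constructor
      · rintro ⟨(⟨ha, hn1, hn2, hn3, hn4, hn5⟩ | rfl | rfl), h2⟩
        · exact absurd (in_unique hi.2.1 hpii a ha h2) hn3
        · rfl
        · exact absurd h2 hij.symm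
      · rintro rfl
        exact ⟨Or.inr (Or.inl rfl), rfl⟩
    have hfo : M'.A.filter (fun a => a.1 = v) = ∅ := by
      rw [Finset.filter_eq_empty_iff]
      intro a ha
      rw [hmemA a] at ha
      rcases ha with ⟨ha, _⟩ | rfl | rfl
      · exact not_out hi.2.2 ha
      · exact hq1
      · exact hg1
    refine iff_of_true ⟨?_, indeg_eq_one_of_filter hfi, outdeg_eq_zero_of_filter hfo⟩ hi
    rw [hV]
    exact Finset.mem_erase.mpr ⟨hvpj, Finset.mem_erase.mpr ⟨hvpi, hi.1⟩⟩
  by_cases hvj : v = j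
  · subst hvj
    have hfi : M'.A.filter (fun a => a.2 = v) = {(g,v)} := by
      ext a
      simp only [Finset.mem_filter, Finset.mem_singleton, hmemA a]
      constructor
      · rintro ⟨(⟨ha, hn1, hn2, hn3, hn4, hn5⟩ | rfl | rfl), h2⟩
        · exact absurd (in_unique hj.2.1 hpjj a ha h2) hn5
        · exact absurd h2 hij
        · rfl
      · rintro rfl
        exact ⟨Or.inr (Or.inr rfl), rfl⟩
    have hfo : M'.A.filter (fun a => a.1 = v) = ∅ := by
      rw [Finset.filter_eq_empty_iff]
      intro a ha
      rw [hmemA a] at ha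
      rcases ha with ⟨ha, _⟩ | rfl | rfl
      · exact not_out hj.2.2 ha
      · exact hq2
      · exact hg2
    refine iff_of_true ⟨?_, indeg_eq_one_of_filter hfi, outdeg_eq_zero_of_filter hfo⟩ hj
    rw [hV]
    exact Finset.mem_erase.mpr ⟨hvpj, Finset.mem_erase.mpr ⟨hvpi, hj.1⟩⟩
  · have hVv : v ∈ M'.V ↔ v ∈ M.V := by
      rw [hV]
      simp [hvpi, hvpj]
    have hdi : M'.indeg v = M.indeg v := by
      refine indeg_congr (fun a h2 => ?_)
      rw [hmemA a]
      constructor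
      · rintro (⟨ha, _⟩ | rfl | rfl)
        · exact ha
        · exact absurd h2.symm hvi
        · exact absurd h2.symm hvj
      · intro ha
        refine Or.inl ⟨ha, fun he => hvpi (by rw [he] at h2; exact h2.symm),
          fun he => hvpi (by rw [he] at h2; exact h2.symm),
          fun he => hvi (by rw [he] at h2; exact h2.symm),
          fun he => hvpj (by rw [he] at h2; exact h2.symm),
          fun he => hvj (by rw [he] at h2; exact h2.symm)⟩
    have hdo : M'.outdeg v = M.outdeg v := by
      refine outdeg_congr (fun a h1 => ?_)
      rw [hmemA a]
      constructor
      · rintro (⟨ha, _⟩ | rfl | rfl)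
        · exact ha
        · exact absurd h1.symm hvq
        · exact absurd h1.symm hvg
      · intro ha
        refine Or.inl ⟨ha, fun he => hvpj (by rw [he] at h1; exact h1.symm),
          fun he => hvq (by rw [he] at h1; exact h1.symm),
          fun he => hvpi (by rw [he] at h1; exact h1.symm),
          fun he => hvg (by rw [he] at h1; exact h1.symm),
          fun he => hvpj (by rw [he] at h1; exact h1.symm)⟩
    unfold isLeaf
    rw [hVv, hdi, hdo]

end Net



lemma reduces_leaf_down {M M' : Net} {s : ℕ×ℕ} (h : Reduces M s M') {v : ℕ}
    (hv : M'.isLeaf v) : M.isLeaf v := by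
  rcases h with ⟨hc, hr⟩ | ⟨hc, hr⟩
  · exact ((Net.cherryReduce_leaf_iff hc hr v).mp hv).1
  · exact (Net.retCherryReduce_leaf_iff hc hr v).mp hv

lemma reduces_removed {M M' : Net} {s : ℕ×ℕ} (h : Reduces M s M') {v : ℕ}
    (hv : M.isLeaf v) (hnv : ¬ M'.isLeaf v) :
    v = s.1 ∧ M.isCherry s.1 s.2 ∧ CherryReduce M s.1 s.2 M' := by
  rcases h with ⟨hc, hr⟩ | ⟨hc, hr⟩
  · refine ⟨?_, hc, hr⟩
    by_contra hne
    exact hnv ((Net.cherryReduce_leaf_iff hc hr v).mpr ⟨hv, hne⟩)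
  · exact absurd ((Net.retCherryReduce_leaf_iff hc hr v).mpr hv) hnv

lemma reduces_fst_leaf {M M' : Net} {s : ℕ×ℕ} (h : Reduces M s M') :
    M.isLeaf s.1 ∧ M.isLeaf s.2 := by
  rcases h with ⟨hc, _⟩ | ⟨hc, _⟩
  · exact ⟨hc.2.1, hc.2.2.1⟩
  · exact ⟨hc.2.1, hc.2.2.1⟩

lemma reducesSeq_leaf_down {M Mf : Net} {S : List (ℕ×ℕ)} (h : ReducesSeq M S Mf) :
    ∀ v, Mf.isLeaf v → M.isLeaf v := by
  induction h with
  | nil => exact fun v hv => hv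
  | cons hred _ ih => exact fun v hv => reduces_leaf_down hred (ih v hv)

lemma reducesSeq_append {M M' M'' : Net} {S T : List (ℕ×ℕ)}
    (h1 : ReducesSeq M S M') (h2 : ReducesSeq M' T M'') : ReducesSeq M (S ++ T) M'' := by
  induction h1 with
  | nil => exact h2
  | cons hred _ ih => exact ReducesSeq.cons hred (ih h2)

lemma reducesSeq_split_last {M Mf : Net} {S : List (ℕ×ℕ)} (h : ReducesSeq M S Mf) :
    S ≠ [] → ∃ S1 s Mp, S = S1 ++ [s] ∧ ReducesSeq M S1 Mp ∧ Reduces Mp s Mf := by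
  induction h with
  | nil => exact fun h => absurd rfl h
  | @cons N Mmid N' s S hred hrest ih =>
    intro _
    rcases S with _ | ⟨t, T⟩
    · cases hrest
      exact ⟨[], s, N, rfl, ReducesSeq.nil N, hred⟩
    · obtain ⟨S1, s', Mp, heq, h1, h2⟩ := ih (by simp)
      exact ⟨s :: S1, s', Mp, by rw [heq]; rfl, ReducesSeq.cons hred h1, h2⟩

lemma reducesSeq_split_removal {M Mf : Net} {S : List (ℕ×ℕ)} (h : ReducesSeq M S Mf) :
    ∀ v, M.isLeaf v → ¬ Mf.isLeaf v →
    ∃ S1 b S2 M1 M2, S = S1 ++ (v,b) :: S2 ∧ ReducesSeq M S1 M1 ∧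
      M1.isCherry v b ∧ CherryReduce M1 v b M2 ∧ ReducesSeq M2 S2 Mf := by
  induction h with
  | nil => exact fun v h1 h2 => absurd h1 h2
  | @cons N Mmid N' s S hred hrest ih =>
    intro v hv hnv
    by_cases hm : Mmid.isLeaf v
    · obtain ⟨S1, b, S2, M1, M2, heq, h1, h2, h3, h4⟩ := ih v hm hnv
      exact ⟨s :: S1, b, S2, M1, M2, by rw [heq]; rfl, ReducesSeq.cons hred h1, h2, h3, h4⟩
    · obtain ⟨hv1, hc, hcr⟩ := reduces_removed hred hv hm
      refine ⟨[], s.2, S, N, Mmid, ?_, ReducesSeq.nil N, ?_, ?_, hrest⟩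
      · subst hv1; simp
      · rw [hv1]; exact hc
      · rw [hv1]; exact hcr

lemma last_reduce_triv {M Nf : Net} {s : ℕ×ℕ} {l : ℕ} (h : Reduces M s Nf)
    (ht : isTrivial Nf l) : s.2 = l ∧ M.isLeaf s.1 ∧ M.isLeaf s.2 ∧ s.1 ≠ s.2 := by
  obtain ⟨r, hrl, hV, hA⟩ := ht
  rcases h with ⟨hc, hcr⟩ | ⟨hc, hcr⟩
  · obtain ⟨p, g, h1, h2, h3, hV', hA'⟩ := hcr
    have hm : ((g, s.2) : ℕ×ℕ) ∈ Nf.A := by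
      rw [hA']
      exact Finset.mem_union_right _ (Finset.mem_singleton_self _)
    rw [hA, Finset.mem_singleton, Prod.mk.injEq] at hm
    exact ⟨hm.2, hc.2.1, hc.2.2.1, hc.1⟩
  · obtain ⟨pi, pj, q, g, h1, h2, h3, h4, h5, h6, hV', hA'⟩ := hcr
    have hmi : ((q, s.1) : ℕ×ℕ) ∈ Nf.A := by
      rw [hA']
      exact Finset.mem_union_right _ (Finset.mem_insert_self _ _)
    have hmj : ((g, s.2) : ℕ×ℕ) ∈ Nf.A := by
      rw [hA']
      refine Finset.mem_union_right _ ?_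
      simp
    rw [hA, Finset.mem_singleton, Prod.mk.injEq] at hmi hmj
    exact absurd (hmi.2.trans hmj.2.symm) hc.1



/-- Relabeling of a network by a function on node labels. -/
def ren (f : ℕ → ℕ) (N : Net) : Net :=
  ⟨N.V.image f, N.A.image (fun a => (f a.1, f a.2))⟩

section Ren

variable {f : ℕ → ℕ}

lemma pmap_inj (hf : Function.Injective f) : Function.Injective (fun a : ℕ×ℕ => (f a.1, f a.2)) := by
  rintro ⟨a1, a2⟩ ⟨b1, b2⟩ h
  simp only [Prod.mk.injEq] at h
  exact Prod.ext (hf h.1) (hf h.2)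

lemma ren_mem_V (hf : Function.Injective f) {N : Net} {v : ℕ} : f v ∈ (ren f N).V ↔ v ∈ N.V := by
  simp only [ren, Finset.mem_image]
  constructor
  · rintro ⟨y, hy, hyv⟩
    rwa [← hf hyv]
  · exact fun h => ⟨v, h, rfl⟩

lemma ren_mem_A (hf : Function.Injective f) {N : Net} {u v : ℕ} : (f u, f v) ∈ (ren f N).A ↔ (u,v) ∈ N.A := by
  simp only [ren, Finset.mem_image]
  constructor
  · rintro ⟨y, hy, hyv⟩
    have := pmap_inj hf (a₁ := y) (a₂ := (u,v)) hyv
    rwa [← this]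
  · exact fun h => ⟨(u,v), h, rfl⟩

lemma ren_indeg (hf : Function.Injective f) {N : Net} {v : ℕ} : (ren f N).indeg (f v) = N.indeg v := by
  show ((N.A.image _).filter _).card = _
  rw [Finset.filter_image]
  have he : (N.A.filter fun a => (f a.1, f a.2).2 = f v) = N.A.filter fun a => a.2 = v := by
    apply Finset.filter_congr
    intro a _
    simp only [eq_iff_iff]
    exact ⟨fun h => hf h, fun h => congrArg f h⟩
  rw [he, Finset.card_image_of_injective _ (pmap_inj hf)]
  rfl

lemma ren_outdeg (hf : Function.Injective f) {N : Net} {v : ℕ} : (ren f N).outdeg (f v) = N.outdeg v := by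
  show ((N.A.image _).filter _).card = _
  rw [Finset.filter_image]
  have he : (N.A.filter fun a => (f a.1, f a.2).1 = f v) = N.A.filter fun a => a.1 = v := by
    apply Finset.filter_congr
    intro a _
    simp only [eq_iff_iff]
    exact ⟨fun h => hf h, fun h => congrArg f h⟩
  rw [he, Finset.card_image_of_injective _ (pmap_inj hf)]
  rfl

lemma ren_isLeaf (hf : Function.Injective f) {N : Net} {v : ℕ} (h : N.isLeaf v) : (ren f N).isLeaf (f v) :=
  ⟨(ren_mem_V hf).mpr h.1, (ren_indeg hf).trans h.2.1, (ren_outdeg hf).trans h.2.2⟩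

lemma ren_isRetic (hf : Function.Injective f) {N : Net} {v : ℕ} (h : N.isRetic v) : (ren f N).isRetic (f v) :=
  ⟨(ren_mem_V hf).mpr h.1, (ren_indeg hf).trans h.2.1, (ren_outdeg hf).trans h.2.2⟩

lemma ren_isTreeNode (hf : Function.Injective f) {N : Net} {v : ℕ} (h : N.isTreeNode v) : (ren f N).isTreeNode (f v) :=
  ⟨(ren_mem_V hf).mpr h.1, (ren_indeg hf).trans h.2.1, (ren_outdeg hf).trans h.2.2⟩

lemma ren_isCherry (hf : Function.Injective f) {N : Net} {i j : ℕ} (h : N.isCherry i j) :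
    (ren f N).isCherry (f i) (f j) := by
  obtain ⟨hij, hi, hj, p, hp1, hp2⟩ := h
  exact ⟨fun he => hij (hf he), ren_isLeaf hf hi, ren_isLeaf hf hj, f p,
    (ren_mem_A hf).mpr hp1, (ren_mem_A hf).mpr hp2⟩

lemma ren_isRetCherry (hf : Function.Injective f) {N : Net} {i j : ℕ} (h : N.isRetCherry i j) :
    (ren f N).isRetCherry (f i) (f j) := by
  obtain ⟨hij, hi, hj, pi, pj, h1, h2, h3, h4, h5⟩ := h
  exact ⟨fun he => hij (hf he), ren_isLeaf hf hi, ren_isLeaf hf hj, f pi, f pj,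
    (ren_mem_A hf).mpr h1, (ren_mem_A hf).mpr h2, ren_isRetic hf h3, ren_isTreeNode hf h4,
    (ren_mem_A hf).mpr h5⟩

lemma ren_V_eq (hf : Function.Injective f) {N N' : Net} (h : N'.V = (N.V.erase u).erase p) :
    (ren f N').V = (((ren f N).V.erase (f u)).erase (f p)) := by
  show N'.V.image f = _
  rw [h, Finset.image_erase hf, Finset.image_erase hf]
  rfl

lemma ren_cherryReduce (hf : Function.Injective f) {N N' : Net} {i j : ℕ} (h : CherryReduce N i j N') :
    CherryReduce (ren f N) (f i) (f j) (ren f N') := by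
  obtain ⟨p, g, h1, h2, h3, hV, hA⟩ := h
  refine ⟨f p, f g, (ren_mem_A hf).mpr h1, (ren_mem_A hf).mpr h2, (ren_mem_A hf).mpr h3,
    ren_V_eq hf hV, ?_⟩
  show N'.A.image _ = _
  rw [hA, Finset.image_union, Finset.image_sdiff _ _ (pmap_inj hf)]
  simp [ren]

lemma ren_retCherryReduce (hf : Function.Injective f) {N N' : Net} {i j : ℕ} (h : RetCherryReduce N i j N') :
    RetCherryReduce (ren f N) (f i) (f j) (ren f N') := by
  obtain ⟨pi, pj, q, g, h1, h2, h3, h4, h5, h6, hV, hA⟩ := h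
  refine ⟨f pi, f pj, f q, f g, (ren_mem_A hf).mpr h1, (ren_mem_A hf).mpr h2,
    (ren_mem_A hf).mpr h3, (ren_mem_A hf).mpr h4, fun he => h5 (hf he),
    (ren_mem_A hf).mpr h6, ren_V_eq hf hV, ?_⟩
  show N'.A.image _ = _
  rw [hA, Finset.image_union, Finset.image_sdiff _ _ (pmap_inj hf)]
  simp [ren]

lemma ren_reduces (hf : Function.Injective f) {N N' : Net} {s : ℕ×ℕ} (h : Reduces N s N') :
    Reduces (ren f N) (f s.1, f s.2) (ren f N') := by
  rcases h with ⟨hc, hr⟩ | ⟨hc, hr⟩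
  · exact Or.inl ⟨ren_isCherry hf hc, ren_cherryReduce hf hr⟩
  · exact Or.inr ⟨ren_isRetCherry hf hc, ren_retCherryReduce hf hr⟩

lemma ren_reducesSeq (hf : Function.Injective f) {N N' : Net} {S : List (ℕ×ℕ)} (h : ReducesSeq N S N') :
    ReducesSeq (ren f N) (S.map (fun s => (f s.1, f s.2))) (ren f N') := by
  induction h with
  | nil M => exact ReducesSeq.nil _
  | cons hred _ ih => exact ReducesSeq.cons (ren_reduces hf hred) ih

lemma ren_trivial (hf : Function.Injective f) {N : Net} {l : ℕ} (h : isTrivial N l) : isTrivial (ren f N) (f l) := by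
  obtain ⟨r, hrl, hV, hA⟩ := h
  refine ⟨f r, fun he => hrl (hf he), ?_, ?_⟩
  · show N.V.image f = _
    rw [hV]; simp
  · show N.A.image _ = _
    rw [hA]; simp

end Ren



open Net in
lemma image_eq_self_of_maps {A : Finset (ℕ×ℕ)} {g : ℕ×ℕ → ℕ×ℕ} (hg : Function.Injective g)
    (h : ∀ a ∈ A, g a ∈ A) : A.image g = A :=
  Finset.eq_of_subset_of_card_le
    (fun x hx => by obtain ⟨y, hy, rfl⟩ := Finset.mem_image.mp hx; exact h y hy)
    (le_of_eq (Finset.card_image_of_injective _ hg).symm)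

open Net in
lemma swap_reduce {M M1 : Net} {b nn : ℕ} (hc : M.isCherry nn b)
    (hcr : CherryReduce M nn b M1) :
    Reduces M (b, nn) (ren (⇑(Equiv.swap b nn)) M1) := by
  obtain ⟨hnb, hn, hb, _⟩ := hc
  obtain ⟨p, g, hpn, hpb, hgp, hV, hA⟩ := hcr
  have hf : Function.Injective (⇑(Equiv.swap b nn)) := (Equiv.swap b nn).injective
  set f := ⇑(Equiv.swap b nn) with hfdef
  have hfb : f b = nn := Equiv.swap_apply_left _ _
  have hfn : f nn = b := Equiv.swap_apply_right _ _
  have hff : ∀ z, f (f z) = z := fun z => Equiv.swap_apply_self _ _ _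
  have hfx : ∀ x, x ≠ b → x ≠ nn → f x = x := fun x h1 h2 =>
    Equiv.swap_apply_of_ne_of_ne h1 h2
  have hpn' : p ≠ nn := by intro h; subst h; exact outdeg_ne_zero hpn hn.2.2
  have hpb' : p ≠ b := by intro h; subst h; exact outdeg_ne_zero hpn hb.2.2
  have hgn : g ≠ nn := by intro h; subst h; exact outdeg_ne_zero hgp hn.2.2
  have hgb : g ≠ b := by intro h; subst h; exact outdeg_ne_zero hgp hb.2.2
  have hfp : f p = p := hfx p hpb' hpn'
  have hfg : f g = g := hfx g hgb hgn
  have hfV : ∀ x, f x ∈ M.V ↔ x ∈ M.V := by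
    intro x
    by_cases hx1 : x = b
    · subst hx1; rw [hfb]; exact iff_of_true hn.1 hb.1
    by_cases hx2 : x = nn
    · subst hx2; rw [hfn]; exact iff_of_true hb.1 hn.1
    · rw [hfx x hx1 hx2]
  have harc : ∀ a ∈ M.A, (f a.1, f a.2) ∈ M.A := by
    intro a ha
    have h1 : a.1 ≠ b := not_out hb.2.2 ha
    have h2 : a.1 ≠ nn := not_out hn.2.2 ha
    by_cases hb2 : a.2 = b
    · have he : a = (p,b) := in_unique hb.2.1 hpb a ha hb2
      rw [he]
      simpa [hfp, hfb] using hpn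
    by_cases hn2 : a.2 = nn
    · have he : a = (p,nn) := in_unique hn.2.1 hpn a ha hn2
      rw [he]
      simpa [hfp, hfn] using hpb
    · rw [hfx _ h1 h2, hfx _ hb2 hn2]
      exact ha
  have hAimg : M.A.image (fun a => (f a.1, f a.2)) = M.A :=
    image_eq_self_of_maps (pmap_inj hf) harc
  refine Or.inl ⟨⟨hnb.symm, hb, hn, p, hpb, hpn⟩, p, g, hpb, hpn, hgp, ?_, ?_⟩
  · show M1.V.image f = _
    rw [hV]
    ext x
    simp only [Finset.mem_image, Finset.mem_erase]
    constructor
    · rintro ⟨y, ⟨hy1, hy2, hy3⟩, rfl⟩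
      exact ⟨fun h => hy1 (hf (h.trans hfp.symm)), fun h => hy2 (hf (h.trans hfn.symm)),
        (hfV y).mpr hy3⟩
    · rintro ⟨hx1, hx2, hx3⟩
      refine ⟨f x, ⟨?_, ?_, (hfV x).mpr hx3⟩, hff x⟩
      · intro h
        exact hx1 (by rw [← hff x, h, hfp])
      · intro h
        exact hx2 (by rw [← hff x, h, hfn])
  · show M1.A.image _ = _
    rw [hA, Finset.image_union, Finset.image_sdiff _ _ (pmap_inj hf), hAimg]
    congr 1
    · congr 1
      simp [hfp, hfb, hfn, hfg]
    · simp [hfg, hfb]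

open Net in
lemma swap_step {M M1 Nf : Net} {b nn l : ℕ} {S2 : List (ℕ×ℕ)}
    (hc : M.isCherry nn b) (hcr : CherryReduce M nn b M1)
    (h2 : ReducesSeq M1 S2 Nf) (ht : isTrivial Nf l) :
    ∃ T' Nf' l', ReducesSeq M ((b,nn) :: T') Nf' ∧ isTrivial Nf' l' := by
  have hf : Function.Injective (⇑(Equiv.swap b nn)) := (Equiv.swap b nn).injective
  exact ⟨S2.map (fun s => (Equiv.swap b nn s.1, Equiv.swap b nn s.2)), _, _,
    ReducesSeq.cons (swap_reduce hc hcr) (ren_reducesSeq hf h2), ren_trivial hf ht⟩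

lemma pairLT_irrefl (a : ℕ×ℕ) : ¬ pairLT a a := by
  rintro (h | ⟨_, h⟩) <;> exact lt_irrefl _ h

lemma seqLE_append {S1 : List (ℕ×ℕ)} : ∀ {x y : ℕ×ℕ} {T T' : List (ℕ×ℕ)},
    seqLE (S1 ++ x :: T) (S1 ++ y :: T') → pairLT x y ∨ x = y := by
  induction S1 with
  | nil =>
    intro x y T T' h
    rcases h with h | ⟨h, _⟩
    · exact Or.inl h
    · exact Or.inr h
  | cons a S1 ih =>
    intro x y T T' h
    rcases h with h | ⟨_, h⟩
    · exact absurd h (pairLT_irrefl a)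
    · exact ih h

end AuxProof


/-- If `S` is a minimum augmentation sequence whose generated network has leaf
set `[n]` (`n ≥ 2`), then the last pair of `S` is `(i, n)` for some `i < n`. -/
theorem last_pair_of_minAugSeq (n : ℕ) (hn : 2 ≤ n) (S : List (ℕ × ℕ)) (N : Net)
    (hmin : isMinAugSeq S) (hgen : Generates S N)
    (hX : N.leaves = Finset.Icc 1 n) :
    ∃ i, i < n ∧ S.getLast? = some (i, n) := by
  obtain ⟨N₀, hgen₀, hcrs, hminle⟩ := hmin
  obtain ⟨Nf, l, hseq, htriv⟩ := hcrs
  have hSne : S ≠ [] := by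
    rintro rfl
    cases hgen with | @triv _ l0 ht =>
    have hl := leaves_trivial ht
    rw [hX] at hl
    have hc := congrArg Finset.card hl
    rw [Nat.card_Icc] at hc
    simp at hc
    omega
  have hleq : N₀.leaves = Finset.Icc 1 n := by
    rw [Net.leaves_eq_of_generates hgen₀ hgen hSne, hX]
  obtain ⟨S1, slast, Mp, hSsplit, hseq1, hlast⟩ := reducesSeq_split_last hseq hSne
  obtain ⟨hs2l, hl1, hl2, hne12⟩ := last_reduce_triv hlast htriv
  have h1mem : slast.1 ∈ Finset.Icc 1 n := by
    rw [← hleq, Net.mem_leaves]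
    exact reducesSeq_leaf_down hseq1 _ hl1
  have hln : l = n := by
    by_contra hlnn
    have hnN : N₀.isLeaf n := by
      rw [← Net.mem_leaves, hleq, Finset.mem_Icc]
      omega
    have hnNf : ¬ Nf.isLeaf n := by
      rw [← Net.mem_leaves, leaves_trivial htriv, Finset.mem_singleton]
      exact fun h => hlnn h.symm
    obtain ⟨T1, b, T2, M1, M2, hS2, hr1, hch, hcr, hr2⟩ :=
      reducesSeq_split_removal hseq n hnN hnNf
    have hbmem : b ∈ Finset.Icc 1 n := by
      rw [← hleq, Net.mem_leaves]
      exact reducesSeq_leaf_down hr1 _ hch.2.2.1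
    have hbn : b ≠ n := fun h => hch.1 h.symm
    obtain ⟨T', Nf', l', hseq', ht'⟩ := swap_step hch hcr hr2 htriv
    have hcrs' : CompleteRS N₀ (T1 ++ (b,n) :: T') :=
      ⟨Nf', l', reducesSeq_append hr1 hseq', ht'⟩
    have hle := hminle _ hcrs'
    rw [hS2] at hle
    rw [Finset.mem_Icc] at hbmem
    rcases seqLE_append hle with h | h
    · rcases h with h | ⟨h, h'⟩
      · omega
      · simp at h
        omega
    · have := congrArg Prod.fst h
      simp at this
      omega
  refine ⟨slast.1, ?_, ?_⟩
  · rw [Finset.mem_Icc] at h1mem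
    have hne : slast.1 ≠ n := by
      intro h
      exact hne12 (by rw [h, ← hln, ← hs2l])
    omega
  · rw [hSsplit, List.getLast?_concat]
    have hpair : slast = (slast.1, n) := by
      rw [show n = slast.2 from (hs2l.trans hln).symm]
    rw [← hpair]
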